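/- arXiv:1505.07547 — 6 statements merged into one kernel-verified Lean document; each statement's English description precedes it below -/
import Mathlib

section
/- Let F be a field, let S ⊆ F be a finite set, and let P ∈ F[X_1,...,X_m] be a nonzero polynomial of total degree at most d. Then the sum over all points a ∈ S^m of the multiplicity of P at a is at most d·|S|^{m-1}. -/
/-- The Hasse derivative of a multivariate polynomial `P` with respect to the index
vector `i : Fin m → ℕ`: the coefficient of `Z^i` in `P(X + Z)`. -/
noncomputable def mvHasseDeriv {F : Type*} [CommSemiring F] {m : ℕ}
    (i : Fin m → ℕ) (P : MvPolynomial (Fin m) F) : MvPolynomial (Fin m) F :=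
  MvPolynomial.coeff (Finsupp.equivFunOnFinite.symm i)
    (MvPolynomial.eval₂ (MvPolynomial.C.comp MvPolynomial.C)
      (fun k => MvPolynomial.C (MvPolynomial.X k) + MvPolynomial.X k) P)

/-- The multiplicity of `P` at a point `a`: the largest `M` (possibly `⊤`) such that
all Hasse derivatives of `P` of weight `< M` vanish at `a`. -/
noncomputable def mvMult {F : Type*} [CommSemiring F] {m : ℕ}
    (P : MvPolynomial (Fin m) F) (a : Fin m → F) : ℕ∞ :=
  sSup {M : ℕ∞ | ∀ i : Fin m → ℕ, ((∑ k, i k : ℕ) : ℕ∞) < M →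
    MvPolynomial.eval a (mvHasseDeriv i P) = 0}

/-!
Write `mult(P, a)` as the order at `0` of the translate `P(X + a)`, i.e. the least degree of a
monomial occurring in it, and induct on the number of variables. View `P` as a polynomial of
degree `t` in `X₀` whose leading coefficient `P_t(Y)` has total degree at most `d - t`. For a
point `a'` of the remaining coordinates, pick a monomial `Y^i` of least degree
`w = ord P_t(Y + a')` in `P_t(Y + a')`. The coefficient of `Y^i` in `P(X₀, Y + a')` is a nonzero
univariate polynomial `q` of degree at most `t`, and the coefficient of `X₀^n Y^i` in
`P(X₀ + b, Y + a')` is the `n`-th Taylor coefficient of `q` at `b`, which is nonzero for `n` the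
multiplicity of `b` as a root of `q`. Hence `ord P(X + (b, a')) ≤ mult_b q + w`, so each line
`{(b, a') : b ∈ S}` contributes at most `t + |S| w`, and the induction hypothesis for `P_t`
bounds the total by `t |S|^(m-1) + |S| (d - t) |S|^(m-2) = d |S|^(m-1)`.
-/

open Finset

lemma Finsupp.degree_cons {m : ℕ} (n : ℕ) (s : Fin m →₀ ℕ) :
    (s.cons n).degree = n + s.degree := by
  simp [Finsupp.degree_eq_sum, Fin.sum_univ_succ]

lemma Finset.sum_piFinset_succ {α M : Type*} [AddCommMonoid M] {m : ℕ} (S : Finset α)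
    (f : (Fin (m + 1) → α) → M) :
    ∑ a ∈ Fintype.piFinset (fun _ => S), f a =
      ∑ b ∈ S, ∑ a ∈ Fintype.piFinset (fun _ : Fin m => S), f (Fin.cons b a) := by
  have h := Finset.filter_piFinset_eq_map_consEquiv (fun _ : Fin (m + 1) => S) fun _ => True
  simp only [filter_true] at h
  rw [h, sum_map, sum_product]
  rfl

namespace Polynomial

variable {R : Type*}

lemma sum_rootMultiplicity_le_natDegree [CommRing R] [IsDomain R] (S : Finset R) (q : R[X]) :
    ∑ b ∈ S, q.rootMultiplicity b ≤ q.natDegree := by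
  classical
  calc ∑ b ∈ S, q.rootMultiplicity b = ∑ b ∈ S, q.roots.count b := by simp only [count_roots]
    _ ≤ ∑ b ∈ S ∪ q.roots.toFinset, q.roots.count b := sum_le_sum_of_subset subset_union_left
    _ = Multiset.card q.roots :=
      Multiset.sum_count_eq_card fun b hb => mem_union_right _ (by simpa using hb)
    _ ≤ q.natDegree := card_roots' q

variable [CommSemiring R] {σ : Type*}

noncomputable def mvCoeff (i : σ →₀ ℕ) (p : (MvPolynomial σ R)[X]) : R[X] :=
  p.sum fun n a => monomial n (a.coeff i)

@[simp]
lemma coeff_mvCoeff (i : σ →₀ ℕ) (p : (MvPolynomial σ R)[X]) (n : ℕ) :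
    (p.mvCoeff i).coeff n = (p.coeff n).coeff i := by
  simp only [mvCoeff, Polynomial.sum_def, finsetSum_coeff, coeff_monomial]
  rw [sum_ite_eq']
  split_ifs with h
  · rfl
  · rw [notMem_support_iff.1 h, MvPolynomial.coeff_zero]

lemma mvCoeff_add (i : σ →₀ ℕ) (p p' : (MvPolynomial σ R)[X]) :
    (p + p').mvCoeff i = p.mvCoeff i + p'.mvCoeff i := by
  ext n; simp

lemma mvCoeff_taylor (i : σ →₀ ℕ) (b : R) (p : (MvPolynomial σ R)[X]) :
    (taylor (MvPolynomial.C b) p).mvCoeff i = taylor b (p.mvCoeff i) := by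
  induction p using Polynomial.induction_on' with
  | add p p' hp hp' => rw [map_add, mvCoeff_add, hp, hp', mvCoeff_add, map_add]
  | monomial k a =>
    have hpow : (X + C (MvPolynomial.C b) : (MvPolynomial σ R)[X]) ^ k =
        ((X + C b) ^ k).map MvPolynomial.C := by
      simp
    have hmon : (monomial k a).mvCoeff i = monomial k (a.coeff i) := by
      ext n; simp only [coeff_mvCoeff, coeff_monomial]; split_ifs <;> simp
    ext n
    rw [coeff_mvCoeff, hmon, taylor_monomial, taylor_monomial, hpow, coeff_C_mul, coeff_map,
      coeff_C_mul, mul_comm, MvPolynomial.coeff_C_mul, mul_comm]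

end Polynomial

namespace MvPolynomial

section CommSemiring

variable {σ R : Type*} [CommSemiring R]

noncomputable def taylor (a : σ → R) : MvPolynomial σ R →ₐ[R] MvPolynomial σ R :=
  aeval fun k => X k + C (a k)

@[simp]
lemma taylor_X (a : σ → R) (k : σ) : taylor a (X k) = X k + C (a k) :=
  aeval_X _ k

@[simp]
lemma taylor_C (a : σ → R) (r : R) : taylor a (C r) = C r :=
  (taylor a).commutes r

lemma taylor_taylor (a c : σ → R) (P : MvPolynomial σ R) :
    taylor a (taylor c P) = taylor (c + a) P := by
  have : (taylor a).comp (taylor c) = taylor (c + a) := algHom_ext fun k => by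
    simp only [AlgHom.comp_apply, taylor_X, map_add, taylor_C, Pi.add_apply]
    ring
  exact congr($this P)

@[simp]
lemma taylor_zero (P : MvPolynomial σ R) : taylor 0 P = P := by
  rw [show taylor (0 : σ → R) = AlgHom.id R _ from algHom_ext fun k => by simp, AlgHom.id_apply]

noncomputable def order (P : MvPolynomial σ R) : ℕ∞ :=
  (P : MvPowerSeries σ R).order

lemma order_le_degree {Q : MvPolynomial σ R} {s : σ →₀ ℕ} (h : coeff s Q ≠ 0) :
    Q.order ≤ s.degree :=
  MvPowerSeries.order_le (by rwa [coeff_coe])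

lemma exists_coeff_ne_zero_degree_eq_order {Q : MvPolynomial σ R} (hQ : Q ≠ 0) :
    ∃ s, coeff s Q ≠ 0 ∧ (s.degree : ℕ∞) = Q.order := by
  obtain ⟨s, hs, hdeg⟩ := MvPowerSeries.exists_coeff_ne_zero_and_order
    (MvPowerSeries.ne_zero_iff_order_finite.1 ((coe_eq_zero_iff).not.2 hQ))
  exact ⟨s, by rwa [coeff_coe] at hs, hdeg⟩

lemma order_taylor_of_isEmpty [IsEmpty σ] {P : MvPolynomial σ R} (hP : P ≠ 0) (a : σ → R) :
    (taylor a P).order = 0 := by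
  obtain ⟨s, hs⟩ := ne_zero_iff.1 hP
  rw [show taylor a = AlgHom.id R _ from algHom_ext isEmptyElim, AlgHom.id_apply]
  exact nonpos_iff_eq_zero.1 ((order_le_degree hs).trans (by simp [Subsingleton.elim s 0]))

lemma eval_mvHasseDeriv {m : ℕ} (a : Fin m → R) (i : Fin m → ℕ)
    (P : MvPolynomial (Fin m) R) :
    eval a (mvHasseDeriv i P) = coeff (Finsupp.equivFunOnFinite.symm i) (taylor a P) := by
  have h : ∀ Q : MvPolynomial (Fin m) R,
      map (eval a) (eval₂ (C.comp C) (fun k => C (X k) + X k) Q) = taylor a Q := by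
    intro Q
    induction Q using MvPolynomial.induction_on with
    | C r => simp
    | add p q hp hq => simp [hp, hq]
    | mul_X p k hp => rw [eval₂_mul, eval₂_X, map_mul, hp]; simp [add_comm]
  rw [mvHasseDeriv, ← coeff_map, h]

lemma mvMult_eq_order_taylor {m : ℕ} (P : MvPolynomial (Fin m) R) (a : Fin m → R) :
    mvMult P a = (taylor a P).order := by
  rw [order]
  refine IsGreatest.csSup_eq ⟨fun i hi => ?_, fun M hM => MvPowerSeries.le_order fun s hs => ?_⟩
  · rw [eval_mvHasseDeriv, ← coeff_coe]
    exact MvPowerSeries.coeff_of_lt_order (by simpa [Finsupp.degree_eq_sum] using hi)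
  · simpa [eval_mvHasseDeriv, Finsupp.degree_eq_sum] using
      hM s (by simpa [Finsupp.degree_eq_sum] using hs)

lemma finSuccEquiv_taylor_cons {m : ℕ} (b : R) (a : Fin m → R)
    (P : MvPolynomial (Fin (m + 1)) R) :
    finSuccEquiv R m (taylor (Fin.cons b a) P) =
      Polynomial.taylor (C b) ((finSuccEquiv R m P).map (taylor a)) := by
  induction P using MvPolynomial.induction_on with
  | C r => simp [finSuccEquiv_apply]
  | add p q hp hq => simp [hp, hq]
  | mul_X p k hp =>
    have hX : finSuccEquiv R m (taylor (Fin.cons b a) (X k)) =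
        Polynomial.taylor (C b) ((finSuccEquiv R m (X k)).map (taylor a)) := by
      cases k using Fin.cases <;> simp [finSuccEquiv_apply, Polynomial.taylor_X]
    rw [map_mul, map_mul, hp, hX, ← Polynomial.taylor_mul, ← Polynomial.map_mul, ← map_mul]

lemma coeff_cons_taylor_cons {m : ℕ} (b : R) (a : Fin m → R) (P : MvPolynomial (Fin (m + 1)) R)
    (i : Fin m →₀ ℕ) (n : ℕ) :
    coeff (i.cons n) (taylor (Fin.cons b a) P) =
      (Polynomial.taylor b (((finSuccEquiv R m P).map (taylor a)).mvCoeff i)).coeff n := by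
  rw [← finSuccEquiv_coeff_coeff, finSuccEquiv_taylor_cons, ← Polynomial.coeff_mvCoeff,
    Polynomial.mvCoeff_taylor]

end CommSemiring

section CommRing

variable {σ R : Type*} [CommRing R]

lemma taylor_injective (a : σ → R) : Function.Injective (taylor a) :=
  Function.LeftInverse.injective (g := taylor (-a)) fun P => by
    rw [taylor_taylor, add_neg_cancel, taylor_zero]

variable [IsDomain R] {m : ℕ}

lemma sum_order_taylor_cons_le (S : Finset R) {P : MvPolynomial (Fin (m + 1)) R} (hP : P ≠ 0)
    (a : Fin m → R) :
    ∑ b ∈ S, (taylor (Fin.cons b a) P).order ≤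
      S.card * (taylor a (finSuccEquiv R m P).leadingCoeff).order +
        (finSuccEquiv R m P).natDegree := by
  set p := finSuccEquiv R m P
  have hlead : taylor a p.leadingCoeff ≠ 0 := (taylor_injective a).ne_iff' (map_zero _) |>.2 <|
    Polynomial.leadingCoeff_ne_zero.2 (EmbeddingLike.map_ne_zero_iff.2 hP)
  obtain ⟨i, hi, hdeg⟩ := exists_coeff_ne_zero_degree_eq_order hlead
  set q := (p.map (taylor a : MvPolynomial (Fin m) R →+* MvPolynomial (Fin m) R)).mvCoeff i
  have hq_coeff (n : ℕ) : q.coeff n = coeff i (taylor a (p.coeff n)) := by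
    simp [q, Polynomial.coeff_map]
  have hq : q ≠ 0 := fun h => hi <| by
    rw [Polynomial.leadingCoeff, ← hq_coeff, h, Polynomial.coeff_zero]
  have hq_natDegree : q.natDegree ≤ p.natDegree :=
    Polynomial.natDegree_le_iff_coeff_eq_zero.2 fun n hn => by
      rw [hq_coeff, Polynomial.coeff_eq_zero_of_natDegree_lt hn, map_zero, coeff_zero]
  have hrow (b : R) : (taylor (Fin.cons b a) P).order ≤
      q.rootMultiplicity b + i.degree := by
    have hne : coeff (i.cons (q.rootMultiplicity b)) (taylor (Fin.cons b a) P) ≠ 0 := by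
      rw [coeff_cons_taylor_cons, Polynomial.rootMultiplicity_eq_natTrailingDegree,
        ← Polynomial.taylor_apply, Polynomial.coeff_natTrailingDegree_ne_zero,
        Ne, Polynomial.taylor_eq_zero]
      exact hq
    simpa [Finsupp.degree_cons] using order_le_degree hne
  calc ∑ b ∈ S, (taylor (Fin.cons b a) P).order
      ≤ ∑ b ∈ S, ((q.rootMultiplicity b : ℕ∞) + i.degree) := sum_le_sum fun b _ => hrow b
    _ = ((∑ b ∈ S, q.rootMultiplicity b : ℕ) : ℕ∞) + S.card * i.degree := by
      rw [sum_add_distrib, sum_const, nsmul_eq_mul, Nat.cast_sum]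
    _ ≤ p.natDegree + S.card * (taylor a p.leadingCoeff).order := by
      rw [hdeg]
      gcongr
      exact_mod_cast (Polynomial.sum_rootMultiplicity_le_natDegree S q).trans hq_natDegree
    _ = _ := add_comm _ _

lemma sum_order_taylor_succ_le (S : Finset R) {P : MvPolynomial (Fin (m + 1)) R} (hP : P ≠ 0) :
    ∑ a ∈ Fintype.piFinset (fun _ => S), (taylor a P).order ≤
      S.card * ∑ a ∈ Fintype.piFinset (fun _ : Fin m => S),
          (taylor a (finSuccEquiv R m P).leadingCoeff).order +
        S.card ^ m * (finSuccEquiv R m P).natDegree := by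
  rw [sum_piFinset_succ, sum_comm]
  calc _ ≤ ∑ a ∈ Fintype.piFinset (fun _ : Fin m => S),
        (S.card * (taylor a (finSuccEquiv R m P).leadingCoeff).order +
          (finSuccEquiv R m P).natDegree) :=
      sum_le_sum fun a _ => sum_order_taylor_cons_le S hP a
    _ = _ := by
      rw [sum_add_distrib, ← mul_sum, sum_const, Fintype.card_piFinset_const, nsmul_eq_mul]
      push_cast
      rfl

theorem sum_order_taylor_le (S : Finset R) (d : ℕ) {P : MvPolynomial (Fin m) R} (hP : P ≠ 0)
    (hdeg : P.totalDegree ≤ d) :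
    ∑ a ∈ Fintype.piFinset (fun _ : Fin m => S), (taylor a P).order ≤
      d * S.card ^ (m - 1) := by
  induction m generalizing d with
  | zero => simp [order_taylor_of_isEmpty hP]
  | succ m ih =>
    refine (sum_order_taylor_succ_le S hP).trans ?_
    set p := finSuccEquiv R m P
    have hlead : p.leadingCoeff ≠ 0 :=
      Polynomial.leadingCoeff_ne_zero.2 (EmbeddingLike.map_ne_zero_iff.2 hP)
    have ht : p.leadingCoeff.totalDegree + p.natDegree ≤ d :=
      (totalDegree_coeff_finSuccEquiv_add_le P _ hlead).trans hdeg
    cases m with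
    | zero =>
      simp only [Fintype.piFinset_of_isEmpty, univ_unique, order_taylor_of_isEmpty hlead,
        sum_const_zero, mul_zero, pow_zero, one_mul, zero_add, tsub_self, mul_one, Nat.cast_le]
      exact_mod_cast le_add_self.trans ht
    | succ k =>
      have hd : ((d - p.natDegree : ℕ) : ℕ∞) + p.natDegree = d := by
        exact_mod_cast Nat.sub_add_cancel (le_add_self.trans ht)
      calc _ ≤ (S.card : ℕ∞) * ((d - p.natDegree : ℕ) * S.card ^ k) +
            S.card ^ (k + 1) * p.natDegree := by
            gcongr
            exact ih (d - p.natDegree) hlead (by omega)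
        _ = d * S.card ^ (k + 1) := by
            rw [← hd]
            ring

end CommRing

end MvPolynomial

/-- **Multiplicity Schwartz–Zippel (sum form).**
If `P` is a nonzero polynomial of total degree at most `d` in `m` variables over a field `F`,
and `S ⊆ F` is finite, then `∑_{a ∈ S^m} mult(P, a) ≤ d ⬝ |S|^(m-1)`. -/
theorem mult_schwartz_zippel_sum {F : Type*} [Field F] {m : ℕ} (S : Finset F) (d : ℕ)
    (P : MvPolynomial (Fin m) F) (hP : P ≠ 0) (hdeg : P.totalDegree ≤ d) :
    ∑ a ∈ Fintype.piFinset (fun _ : Fin m => S), mvMult P a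
      ≤ (d : ℕ∞) * (S.card : ℕ∞) ^ (m - 1) := by
  simp only [MvPolynomial.mvMult_eq_order_taylor]
  exact MvPolynomial.sum_order_taylor_le S d hP hdeg
end

section
/- Let m, s, d, q be positive integers. Then, as real numbers, binom(d+m, m) / (binom(s+m−1, m)·q^m) ≥ (s/(m+s))^m · (d/(sq))^m ≥ (1 − m²/s)·(d/(sq))^m. (This is the lower bound on the rate of the multiplicity code of order-s evaluations of degree-d polynomials in m variables over F_q.) -/
/-!
`binom(d+m, m) / binom(s+m-1, m) = ∏_{i<m} (d+1+i)/(s+i)`, and each factor is at least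
`d/(s+m)`; with `q^m` in the denominator on both sides this is the first inequality.
The second is Bernoulli's inequality `(1 - m/(m+s))^m ≥ 1 - m²/(m+s)`.
-/

open Finset

theorem Nat.ascFactorial_mul_pow_le (s d k : ℕ) :
    s.ascFactorial k * d ^ k ≤ (d + 1).ascFactorial k * (s + k) ^ k := by
  have pow_eq_prod (a : ℕ) : a ^ k = ∏ _i ∈ range k, a := by simp
  rw [Nat.ascFactorial_eq_prod_range, Nat.ascFactorial_eq_prod_range, pow_eq_prod d,
    pow_eq_prod (s + k), ← prod_mul_distrib, ← prod_mul_distrib]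
  refine prod_le_prod' fun i hi => ?_
  have hik : i < k := mem_range.mp hi
  calc (s + i) * d ≤ (s + k) * (d + 1 + i) := Nat.mul_le_mul (by omega) (by omega)
    _ = (d + 1 + i) * (s + k) := Nat.mul_comm _ _

theorem Nat.choose_mul_pow_le (s d m : ℕ) :
    (s + m - 1).choose m * d ^ m ≤ (d + m).choose m * (s + m) ^ m := by
  have h := Nat.ascFactorial_mul_pow_le s d m
  rw [Nat.ascFactorial_eq_factorial_mul_choose', Nat.ascFactorial_eq_factorial_mul_choose,
    mul_assoc, mul_assoc] at h
  exact Nat.le_of_mul_le_mul_left h (Nat.factorial_pos m)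

theorem div_add_pow_le_choose_div_choose (m s d : ℕ) (hs : 0 < s) :
    ((d : ℝ) / (m + s)) ^ m ≤ ((d + m).choose m : ℝ) / ((s + m - 1).choose m) := by
  have hchoose : (0 : ℝ) < (s + m - 1).choose m := by
    exact_mod_cast Nat.choose_pos (by omega)
  rw [div_pow, div_le_div_iff₀ (by positivity) hchoose, add_comm (m : ℝ)]
  calc (d : ℝ) ^ m * (s + m - 1).choose m = ((s + m - 1).choose m * d ^ m : ℕ) := by
        push_cast; ring
    _ ≤ ((d + m).choose m * (s + m) ^ m : ℕ) := by exact_mod_cast Nat.choose_mul_pow_le s d m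
    _ = (d + m).choose m * ((s : ℝ) + m) ^ m := by push_cast; ring

theorem one_sub_sq_div_le_div_add_pow (m : ℕ) {s : ℝ} (hs : 0 < s) :
    1 - (m : ℝ) ^ 2 / s ≤ (s / (m + s)) ^ m := by
  have hms : 0 < (m : ℝ) + s := by positivity
  have hratio : (m : ℝ) / (m + s) ≤ 1 := (div_le_one hms).mpr (by linarith)
  have hbernoulli := one_add_mul_le_pow (a := -((m : ℝ) / (m + s))) (by linarith) m
  have hsq : (m : ℝ) ^ 2 / (m + s) ≤ (m : ℝ) ^ 2 / s :=
    div_le_div_of_nonneg_left (by positivity) hs (by linarith)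
  calc 1 - (m : ℝ) ^ 2 / s ≤ 1 - (m : ℝ) ^ 2 / (m + s) := by linarith
    _ = 1 + m * -((m : ℝ) / (m + s)) := by ring
    _ ≤ (1 + -((m : ℝ) / (m + s))) ^ m := hbernoulli
    _ = (s / (m + s)) ^ m := by congr 1; field_simp; ring

theorem multiplicity_code_rate_general (m s d q : ℕ) (hs : 0 < s) :
    ((d + m).choose m : ℝ) / (((s + m - 1).choose m : ℝ) * (q : ℝ) ^ m)
        ≥ ((s : ℝ) / ((m : ℝ) + (s : ℝ))) ^ m * ((d : ℝ) / ((s : ℝ) * (q : ℝ))) ^ m ∧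
      ((s : ℝ) / ((m : ℝ) + (s : ℝ))) ^ m * ((d : ℝ) / ((s : ℝ) * (q : ℝ))) ^ m
        ≥ (1 - (m : ℝ) ^ 2 / (s : ℝ)) * ((d : ℝ) / ((s : ℝ) * (q : ℝ))) ^ m := by
  have hsR : (0 : ℝ) < s := by exact_mod_cast hs
  refine ⟨?_, mul_le_mul_of_nonneg_right (one_sub_sq_div_le_div_add_pow m hsR) (by positivity)⟩
  have hfactor : (s : ℝ) / (m + s) * (d / (s * q)) = d / (m + s) / q := by
    field_simp
  rw [ge_iff_le, ← mul_pow, hfactor, div_pow, ← div_div]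
  exact div_le_div_of_nonneg_right (div_add_pow_le_choose_div_choose m s d hs) (by positivity)

/-- **Rate of multiplicity codes.**
For positive integers `m, s, d, q`:
`binom(d+m, m) / (binom(s+m−1, m)·q^m) ≥ (s/(m+s))^m · (d/(sq))^m ≥ (1 − m²/s)·(d/(sq))^m`. -/
theorem multiplicity_code_rate (m s d q : ℕ) (hm : 0 < m) (hs : 0 < s) (hd : 0 < d)
    (hq : 0 < q) :
    ((d + m).choose m : ℝ) / (((s + m - 1).choose m : ℝ) * (q : ℝ) ^ m)
        ≥ ((s : ℝ) / ((m : ℝ) + (s : ℝ))) ^ m * ((d : ℝ) / ((s : ℝ) * (q : ℝ))) ^ m ∧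
      ((s : ℝ) / ((m : ℝ) + (s : ℝ))) ^ m * ((d : ℝ) / ((s : ℝ) * (q : ℝ))) ^ m
        ≥ (1 - (m : ℝ) ^ 2 / (s : ℝ)) * ((d : ℝ) / ((s : ℝ) * (q : ℝ))) ^ m :=
  multiplicity_code_rate_general m s d q hs
end

section
/- Let F be a field, let P ∈ F[X_1,...,X_m], let a, b ∈ F^m, and let l be a vector of nonnegative integers. Define the univariate polynomial Q_l(T) = P^{(l)}(a + b·T) ∈ F[T] (substituting X_k = a_k + b_k·T in P^{(l)}). Then for every nonnegative integer j, the coefficient of T^j in Q_l(T) equals Σ_{i : wt(i) = j} binom(l+i, l) · P^{(l+i)}(a) · b^i. -/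
open MvPolynomial Finset
open Finsupp (equivFunOnFinite single)

theorem Nat.choose_mul_choose_sub (d l i : ℕ) :
    d.choose l * (d - l).choose i = (l + i).choose l * d.choose (l + i) := by
  rcases le_or_gt (l + i) d with h | h
  · simpa [mul_comm] using (Nat.choose_mul (n := d) (Nat.le_add_right l i)).symm
  · rw [Nat.choose_eq_zero_of_lt h, mul_zero]
    rcases le_or_gt l d with h' | h'
    · rw [Nat.choose_eq_zero_of_lt (by omega : d - l < i), mul_zero]
    · rw [Nat.choose_eq_zero_of_lt h', zero_mul]

section

variable {F : Type*} [CommSemiring F] {m : ℕ}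

/-- `P ↦ P(X + Z)`, with the variables `X` in the coefficients and `Z` outside. -/
noncomputable def mvTaylor :
    MvPolynomial (Fin m) F →+* MvPolynomial (Fin m) (MvPolynomial (Fin m) F) :=
  eval₂Hom (C.comp C) fun k => C (X k) + X k

theorem mvHasseDeriv_eq_coeff_mvTaylor (i : Fin m → ℕ) (P : MvPolynomial (Fin m) F) :
    mvHasseDeriv i P = (mvTaylor P).coeff (equivFunOnFinite.symm i) :=
  rfl

theorem mvHasseDeriv_add (i : Fin m → ℕ) (P Q : MvPolynomial (Fin m) F) :
    mvHasseDeriv i (P + Q) = mvHasseDeriv i P + mvHasseDeriv i Q := by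
  simp only [mvHasseDeriv_eq_coeff_mvTaylor, map_add, coeff_add]

theorem C_X_add_X_pow (k : Fin m) (n : ℕ) :
    (C (X k) + X k : MvPolynomial (Fin m) (MvPolynomial (Fin m) F)) ^ n =
      ∑ s ∈ range (n + 1),
        monomial (single k s) (monomial (single k (n - s)) (n.choose s : F)) := by
  rw [add_comm, add_pow]
  refine sum_congr rfl fun s _ => ?_
  simp only [← C_mul_X_pow_eq_monomial, map_mul, map_pow, map_natCast]
  ring

theorem mvTaylor_monomial (d : Fin m →₀ ℕ) (c : F) :
    mvTaylor (monomial d c) = ∑ s ∈ Fintype.piFinset fun k => range (d k + 1),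
      monomial (equivFunOnFinite.symm s)
        (monomial (d - equivFunOnFinite.symm s) (((∏ k, (d k).choose (s k) : ℕ) : F) * c)) := by
  rw [mvTaylor, eval₂Hom_monomial, Finsupp.prod_fintype _ _ fun k => pow_zero _]
  simp only [C_X_add_X_pow, prod_univ_sum, mul_sum]
  refine sum_congr rfl fun s _ => ?_
  have hsub : ∑ k, single k (d k - s k) = d - equivFunOnFinite.symm s := by
    rw [← Finsupp.equivFunOnFinite_symm_eq_sum]; ext; rfl
  rw [← monomial_sum_prod, ← monomial_sum_prod, ← Finsupp.equivFunOnFinite_symm_eq_sum, hsub,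
    RingHom.comp_apply, C_mul_monomial, C_mul_monomial, Nat.cast_prod, mul_comm c]

theorem mvHasseDeriv_monomial (i : Fin m → ℕ) (d : Fin m →₀ ℕ) (c : F) :
    mvHasseDeriv i (monomial d c) =
      monomial (d - equivFunOnFinite.symm i) (((∏ k, (d k).choose (i k) : ℕ) : F) * c) := by
  simp only [mvHasseDeriv_eq_coeff_mvTaylor, mvTaylor_monomial, coeff_sum, coeff_monomial,
    EmbeddingLike.apply_eq_iff_eq, sum_ite_eq']
  split_ifs with hi
  · rfl
  · obtain ⟨k, hk⟩ : ∃ k, d k < i k := by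
      simpa [Fintype.mem_piFinset, Nat.lt_succ_iff] using hi
    rw [prod_eq_zero (mem_univ k) (Nat.choose_eq_zero_of_lt hk), Nat.cast_zero, zero_mul,
      monomial_zero]

theorem mvHasseDeriv_mvHasseDeriv (l i : Fin m → ℕ) (P : MvPolynomial (Fin m) F) :
    mvHasseDeriv i (mvHasseDeriv l P) =
      C ((∏ k, (l k + i k).choose (l k) : ℕ) : F) * mvHasseDeriv (l + i) P := by
  induction P using MvPolynomial.induction_on' with
  | add P Q hP hQ => simp only [mvHasseDeriv_add, hP, hQ, mul_add]
  | monomial d c =>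
    have hexp : d - equivFunOnFinite.symm l - equivFunOnFinite.symm i =
        d - equivFunOnFinite.symm (l + i) := by
      ext k
      simp only [Finsupp.tsub_apply, Finsupp.equivFunOnFinite_symm_apply_apply, Pi.add_apply]
      omega
    simp only [mvHasseDeriv_monomial, C_mul_monomial, hexp, ← mul_assoc, ← Nat.cast_mul,
      ← prod_mul_distrib]
    congr 3
    exact prod_congr rfl fun k _ => (mul_comm _ _).trans (Nat.choose_mul_choose_sub _ _ _)

/-- `R(X, Z) ↦ R(a, b T)`. -/
noncomputable def evalLine (a b : Fin m → F) :
    MvPolynomial (Fin m) (MvPolynomial (Fin m) F) →+* Polynomial F :=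
  eval₂Hom (Polynomial.C.comp (eval a)) fun k => Polynomial.C (b k) * Polynomial.X

theorem evalLine_mvTaylor (a b : Fin m → F) (P : MvPolynomial (Fin m) F) :
    evalLine a b (mvTaylor P) =
      aeval (fun k => Polynomial.C (a k) + Polynomial.C (b k) * Polynomial.X) P := by
  suffices (evalLine a b).comp mvTaylor =
      (aeval fun k => Polynomial.C (a k) + Polynomial.C (b k) * Polynomial.X).toRingHom from
    DFunLike.congr_fun this P
  ext <;> simp [evalLine, mvTaylor]

theorem evalLine_monomial (a b : Fin m → F) (D : Fin m →₀ ℕ) (r : MvPolynomial (Fin m) F) :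
    evalLine a b (monomial D r) =
      Polynomial.C (eval a r * ∏ k, b k ^ D k) * Polynomial.X ^ ∑ k, D k := by
  rw [evalLine, eval₂Hom_monomial, Finsupp.prod_fintype _ _ fun k => pow_zero _]
  simp only [mul_pow, prod_mul_distrib, prod_pow_eq_pow_sum, RingHom.comp_apply, map_mul,
    map_prod, map_pow, mul_assoc]

theorem coeff_evalLine (a b : Fin m → F) (j : ℕ)
    (R : MvPolynomial (Fin m) (MvPolynomial (Fin m) F)) :
    (evalLine a b R).coeff j = ∑ i ∈ Nat.antidiagonalTuple m j,
      eval a (R.coeff (equivFunOnFinite.symm i)) * ∏ k, b k ^ i k := by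
  induction R using MvPolynomial.induction_on' with
  | add R S hR hS =>
    simp only [map_add, Polynomial.coeff_add, coeff_add, hR, hS, add_mul, sum_add_distrib]
  | monomial D r =>
    have hterm (i : Fin m → ℕ) : eval a ((monomial D r).coeff (equivFunOnFinite.symm i)) *
        ∏ k, b k ^ i k = if ⇑D = i then eval a r * ∏ k, b k ^ D k else 0 := by
      have hD : D = equivFunOnFinite.symm i ↔ ⇑D = i := Equiv.eq_symm_apply _
      simp only [coeff_monomial, hD]
      split_ifs with h
      · rw [h]
      · rw [map_zero, zero_mul]
    simp only [hterm, sum_ite_eq, Finset.Nat.mem_antidiagonalTuple, evalLine_monomial,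
      Polynomial.coeff_C_mul_X_pow]
    exact if_congr eq_comm rfl rfl

end

/-- **Coefficients of the restriction of a derivative to a line.**
For `Q_l(T) = P^{(l)}(a + b·T)`, the coefficient of `T^j` in `Q_l` equals
`∑_{i : wt(i) = j} binom(l+i, l) · P^{(l+i)}(a) · b^i`. -/
theorem coeff_restriction_to_line {F : Type*} [Field F] {m : ℕ}
    (P : MvPolynomial (Fin m) F) (a b : Fin m → F) (l : Fin m → ℕ) (j : ℕ) :
    (MvPolynomial.aeval
        (fun k => Polynomial.C (a k) + Polynomial.C (b k) * Polynomial.X)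
        (mvHasseDeriv l P)).coeff j =
      ∑ i ∈ Finset.Nat.antidiagonalTuple m j,
        ((∏ k, (l k + i k).choose (l k) : ℕ) : F) *
          MvPolynomial.eval a (mvHasseDeriv (l + i) P) * ∏ k, b k ^ i k := by
  rw [← evalLine_mvTaylor, coeff_evalLine]
  refine sum_congr rfl fun i _ => ?_
  rw [← mvHasseDeriv_eq_coeff_mvTaylor, mvHasseDeriv_mvHasseDeriv, map_mul, eval_C]
end

section
/- Let F be a field, let P ∈ F[X_1,...,X_m], let a, b ∈ F^m, and let l be a vector of nonnegative integers. Define the univariate polynomial Q_l(T) = P^{(l)}(a + b·T) ∈ F[T]. Then for every t ∈ F and every nonnegative integer j, the j-th (univariate) Hasse derivative of Q_l satisfies Q_l^{(j)}(t) = Σ_{i : wt(i) = j} binom(l+i, l) · P^{(l+i)}(a + t·b) · b^i. -/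
/-! Taylor shifting `Q_l` to `t` turns it into `S ↦ P^{(l)}(a + t•b + b•S)`, so `Q_l^{(j)}(t)`
is the coefficient of `S^j` there. Substituting `X = a + t•b`, `Z = b•S` into the expansion
`P^{(l)}(X + Z) = ∑_i (P^{(l)})^{(i)}(X) Z^i` picks out the `i` of weight `j`, and
`(P^{(l)})^{(i)} = binom(l+i, l) P^{(l+i)}` is checked on monomials, where it is the identity
`binom(n, l) binom(n-l, i) = binom(l+i, l) binom(n, l+i)`. -/

open Finset

namespace MvPolynomial

variable {R : Type*} [CommSemiring R] {m : ℕ}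

/-- `P ↦ P(X + Z)`, the outer variables playing the role of `Z`. -/
noncomputable def taylorExpand :
    MvPolynomial (Fin m) R →+* MvPolynomial (Fin m) (MvPolynomial (Fin m) R) :=
  eval₂Hom (C.comp C) fun k => C (X k) + X k

theorem mvHasseDeriv_eq_coeff_taylorExpand (i : Fin m → ℕ) (P : MvPolynomial (Fin m) R) :
    mvHasseDeriv i P = (taylorExpand P).coeff (Finsupp.equivFunOnFinite.symm i) :=
  rfl

theorem mvHasseDeriv_add (i : Fin m → ℕ) (P Q : MvPolynomial (Fin m) R) :
    mvHasseDeriv i (P + Q) = mvHasseDeriv i P + mvHasseDeriv i Q := by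
  simp only [mvHasseDeriv_eq_coeff_taylorExpand, map_add, coeff_add]

theorem taylorExpand_X_pow (k : Fin m) (e : ℕ) :
    taylorExpand (X k ^ e : MvPolynomial (Fin m) R) =
      ∑ s ∈ range (e + 1),
        monomial (Finsupp.single k s) ((e.choose s : MvPolynomial (Fin m) R) * X k ^ (e - s)) := by
  rw [map_pow, taylorExpand, coe_eval₂Hom, eval₂_X, add_comm, add_pow]
  refine sum_congr rfl fun s _ => ?_
  rw [X_pow_eq_monomial, ← C_pow, ← C_eq_coe_nat, mul_assoc, ← C_mul, mul_comm,
    C_mul_monomial, mul_one, mul_comm]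

theorem taylorExpand_monomial (n : Fin m →₀ ℕ) (c : R) :
    taylorExpand (monomial n c) =
      ∑ s ∈ Fintype.piFinset fun k => range (n k + 1),
        monomial (Finsupp.equivFunOnFinite.symm s)
          (((∏ k, (n k).choose (s k) : ℕ) : MvPolynomial (Fin m) R) *
            monomial (n - Finsupp.equivFunOnFinite.symm s) c) := by
  rw [monomial_eq, Finsupp.prod_fintype _ _ fun k => pow_zero _, map_mul, map_prod]
  simp only [taylorExpand_X_pow, prod_univ_sum, mul_sum]
  refine sum_congr rfl fun s _ => ?_
  rw [← monomial_sum_prod, ← Finsupp.equivFunOnFinite_symm_eq_sum, taylorExpand, coe_eval₂Hom,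
    eval₂_C, RingHom.comp_apply, C_mul_monomial, monomial_eq (s := n - _),
    Finsupp.prod_fintype _ _ fun k => pow_zero _]
  simp only [Finsupp.coe_tsub, Finsupp.coe_equivFunOnFinite_symm, Pi.sub_apply, Nat.cast_prod,
    prod_mul_distrib]
  congr 1
  ring

theorem mvHasseDeriv_monomial (i : Fin m → ℕ) (n : Fin m →₀ ℕ) (c : R) :
    mvHasseDeriv i (monomial n c) =
      monomial (n - Finsupp.equivFunOnFinite.symm i) ((∏ k, (n k).choose (i k) : ℕ) * c) := by
  rw [mvHasseDeriv_eq_coeff_taylorExpand, taylorExpand_monomial, coeff_sum]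
  simp only [coeff_monomial, Finsupp.equivFunOnFinite.symm.injective.eq_iff, sum_ite_eq']
  split_ifs with hi
  · rw [← C_eq_coe_nat, C_mul_monomial]
  · obtain ⟨k, hk⟩ : ∃ k, n k < i k := by
      simpa [Fintype.mem_piFinset, Nat.lt_succ_iff] using hi
    rw [prod_eq_zero (mem_univ k) (Nat.choose_eq_zero_of_lt hk), Nat.cast_zero, zero_mul,
      monomial_zero]

theorem mvHasseDeriv_mvHasseDeriv (l i : Fin m → ℕ) (P : MvPolynomial (Fin m) R) :
    mvHasseDeriv i (mvHasseDeriv l P) =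
      (∏ k, (l k + i k).choose (l k)) • mvHasseDeriv (l + i) P := by
  induction P using induction_on' with
  | monomial n c =>
    have hchoose (k : Fin m) : (n k - l k).choose (i k) * (n k).choose (l k) =
        (l k + i k).choose (l k) * (n k).choose (l k + i k) := by
      rw [mul_comm, mul_comm _ ((n k).choose _), Nat.choose_mul (Nat.le_add_right _ _),
        Nat.add_sub_cancel_left]
    have hsymm : Finsupp.equivFunOnFinite.symm (l + i) =
        Finsupp.equivFunOnFinite.symm l + Finsupp.equivFunOnFinite.symm i := by ext; rfl
    simp only [mvHasseDeriv_monomial, smul_monomial, tsub_tsub, hsymm, nsmul_eq_mul, ← mul_assoc,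
      ← Nat.cast_mul, ← prod_mul_distrib]
    simp only [Finsupp.coe_tsub, Finsupp.coe_equivFunOnFinite_symm, Pi.sub_apply, Pi.add_apply,
      hchoose]
  | add P Q hP hQ => rw [mvHasseDeriv_add, mvHasseDeriv_add, hP, hQ, mvHasseDeriv_add, smul_add]

theorem coeff_eval₂_C_mul_X {A S : Type*} [CommSemiring A] [CommSemiring S] (φ : A →+* S)
    (b : Fin m → S) (Q : MvPolynomial (Fin m) A) (j : ℕ) :
    (eval₂ (Polynomial.C.comp φ) (fun k => Polynomial.C (b k) * Polynomial.X) Q).coeff j =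
      ∑ i ∈ Nat.antidiagonalTuple m j,
        φ (Q.coeff (Finsupp.equivFunOnFinite.symm i)) * ∏ k, b k ^ i k := by
  induction Q using induction_on' with
  | monomial d c =>
    have hprod : ∏ k, (Polynomial.C (b k) * Polynomial.X) ^ d k =
        Polynomial.C (∏ k, b k ^ d k) * Polynomial.X ^ ∑ k, d k := by
      simp only [mul_pow, prod_mul_distrib, ← Polynomial.C_pow, ← map_prod, prod_pow_eq_pow_sum]
    simp only [eval₂_monomial, Finsupp.prod_fintype _ _ fun k => pow_zero _, hprod,
      RingHom.comp_apply, ← mul_assoc, ← Polynomial.C_mul, Polynomial.coeff_C_mul_X_pow,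
      coeff_monomial, Equiv.eq_symm_apply, apply_ite φ, map_zero, ite_mul, zero_mul,
      sum_ite_eq, Nat.mem_antidiagonalTuple, Finsupp.equivFunOnFinite_apply, eq_comm (a := j)]
  | add P Q hP hQ =>
    simp only [eval₂_add, Polynomial.coeff_add, coeff_add, map_add, add_mul, sum_add_distrib, hP,
      hQ]

theorem aeval_line_eq_eval₂_taylorExpand (a b : Fin m → R) (P : MvPolynomial (Fin m) R) :
    aeval (fun k => Polynomial.C (a k) + Polynomial.C (b k) * Polynomial.X) P =
      eval₂ (Polynomial.C.comp (eval a)) (fun k => Polynomial.C (b k) * Polynomial.X)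
        (taylorExpand P) := by
  suffices (aeval fun k => Polynomial.C (a k) + Polynomial.C (b k) * Polynomial.X).toRingHom =
      (eval₂Hom (Polynomial.C.comp (eval a)) fun k => Polynomial.C (b k) * Polynomial.X).comp
        taylorExpand from
    DFunLike.congr_fun this P
  ext <;> simp [taylorExpand, Polynomial.algebraMap_eq]

theorem coeff_aeval_line (a b : Fin m → R) (P : MvPolynomial (Fin m) R) (j : ℕ) :
    (aeval (fun k => Polynomial.C (a k) + Polynomial.C (b k) * Polynomial.X) P).coeff j =
      ∑ i ∈ Nat.antidiagonalTuple m j, eval a (mvHasseDeriv i P) * ∏ k, b k ^ i k := by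
  rw [aeval_line_eq_eval₂_taylorExpand, coeff_eval₂_C_mul_X]
  rfl

theorem taylor_aeval_line (a b : Fin m → R) (t : R) (P : MvPolynomial (Fin m) R) :
    Polynomial.taylor t
        (aeval (fun k => Polynomial.C (a k) + Polynomial.C (b k) * Polynomial.X) P) =
      aeval (fun k => Polynomial.C ((a + t • b) k) + Polynomial.C (b k) * Polynomial.X) P := by
  rw [Polynomial.taylor_apply, Polynomial.comp_eq_aeval, ← AlgHom.comp_apply]
  congr 1
  refine algHom_ext fun k => ?_
  simp only [AlgHom.comp_apply, aeval_X, map_add, map_mul, Polynomial.aeval_C,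
    Polynomial.aeval_X, Polynomial.algebraMap_eq, Pi.add_apply, Pi.smul_apply, smul_eq_mul]
  ring

end MvPolynomial

/-- **Derivatives of the restriction of a derivative to a line.**
For `Q_l(T) = P^{(l)}(a + b·T)`, the `j`-th univariate Hasse derivative satisfies
`Q_l^{(j)}(t) = ∑_{i : wt(i) = j} binom(l+i, l) · P^{(l+i)}(a + t·b) · b^i`. -/
theorem hasseDeriv_restriction_to_line {F : Type*} [Field F] {m : ℕ}
    (P : MvPolynomial (Fin m) F) (a b : Fin m → F) (l : Fin m → ℕ) (t : F) (j : ℕ) :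
    (Polynomial.hasseDeriv j
        (MvPolynomial.aeval
          (fun k => Polynomial.C (a k) + Polynomial.C (b k) * Polynomial.X)
          (mvHasseDeriv l P))).eval t =
      ∑ i ∈ Finset.Nat.antidiagonalTuple m j,
        ((∏ k, (l k + i k).choose (l k) : ℕ) : F) *
          MvPolynomial.eval (a + t • b) (mvHasseDeriv (l + i) P) * ∏ k, b k ^ i k := by
  rw [← Polynomial.taylor_coeff, MvPolynomial.taylor_aeval_line, MvPolynomial.coeff_aeval_line]
  refine sum_congr rfl fun i _ => ?_
  rw [MvPolynomial.mvHasseDeriv_mvHasseDeriv, map_nsmul, nsmul_eq_mul]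
end

section
/- Let F be a field, let m ≥ 2, let c be a nonnegative integer, let a ∈ F^m, and let P ∈ F[X_1,...,X_m]. Let B ⊆ F^m be a basis of F^m over F. Suppose that for every b ∈ B and every vector l of nonnegative integers with wt(l) < c, the univariate polynomial P^{(l)}(a + b·T) ∈ F[T] is identically zero. Then (m−1)·mult(P, a) ≥ m·c; in particular P vanishes at a with multiplicity at least c·m/(m−1). -/
/-!
Put `R(Y) = P(a + ∑ₖ Yₖ Bₖ)`. The hypothesis on the line through `a` in direction `Bₖ` says that
`R` has no monomial `Yᵉ` with `∑_{j ≠ k} eⱼ < c`. If `deg e < ⌈mc/(m-1)⌉`, choosing `k` with `eₖ`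
maximal gives `∑_{j ≠ k} eⱼ ≤ (m-1)·deg e/m < c`; so `R`, and with it `P(a + Z)` (an invertible
linear change of variables preserves homogeneous components), has no monomial of degree below
`⌈mc/(m-1)⌉`. The coefficients of `P(a + Z)` are the values `P^{(i)}(a)`.
-/

open MvPolynomial

theorem Finsupp.exists_degree_erase_lt {σ : Type*} [Fintype σ] {e : σ →₀ ℕ} {c : ℕ}
    (he : e.degree < Fintype.card σ * c ⌈/⌉ (Fintype.card σ - 1)) :
    ∃ k, (e.erase k).degree < c := by
  set n := Fintype.card σ
  have hn : 0 < n - 1 := by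
    by_contra h
    simp [ceilDiv_of_nonpos (not_lt.1 h)] at he
  have hlt : (n - 1) * e.degree < n * c :=
    lt_of_not_ge fun h => (not_le.2 he) ((ceilDiv_le_iff_le_mul hn).2 h)
  have : Nonempty σ := Fintype.card_pos_iff.1 (by omega)
  obtain ⟨k, hk⟩ := Finite.exists_max e
  refine ⟨k, ?_⟩
  have hsplit : e.degree = (e.erase k).degree + e k := by
    rw [← degree_single k (e k), ← map_add, add_comm, single_add_erase]
  have hmax : e.degree ≤ n * e k := by
    simpa [degree_eq_sum] using Finset.sum_le_sum fun j (_ : j ∈ Finset.univ) => hk j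
  obtain ⟨n', hn'⟩ : ∃ n', n = n' + 1 := ⟨n - 1, by omega⟩
  rw [hn', add_tsub_cancel_right] at hlt
  rw [hn'] at hmax
  nlinarith

namespace MvPolynomial

variable {R σ τ : Type*} [CommSemiring R]

def VanishesAtZeroToOrder (Q : MvPolynomial σ R) (n : ℕ) : Prop :=
  ∀ i : σ →₀ ℕ, i.degree < n → coeff i Q = 0

theorem homogeneousComponent_aeval {g : σ → MvPolynomial τ R}
    (hg : ∀ j, (g j).IsHomogeneous 1) (n : ℕ) (Q : MvPolynomial σ R) :
    homogeneousComponent n (aeval g Q) = aeval g (homogeneousComponent n Q) := by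
  induction Q using MvPolynomial.induction_on' with
  | monomial d r =>
    have hd : (aeval g (monomial d r)).IsHomogeneous d.degree := by
      simpa using (isHomogeneous_monomial r rfl).aeval g hg
    rw [homogeneousComponent_of_mem hd,
      homogeneousComponent_of_mem (isHomogeneous_monomial r rfl)]
    split_ifs <;> simp
  | add p q hp hq => simp only [map_add, hp, hq]

theorem VanishesAtZeroToOrder.aeval {Q : MvPolynomial σ R} {n : ℕ}
    (hQ : Q.VanishesAtZeroToOrder n) {g : σ → MvPolynomial τ R}
    (hg : ∀ j, (g j).IsHomogeneous 1) : (aeval g Q).VanishesAtZeroToOrder n := by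
  intro e he
  have hQe : homogeneousComponent e.degree Q = 0 := by
    ext d
    rw [coeff_homogeneousComponent, coeff_zero]
    split_ifs with hd
    · exact hQ d (hd ▸ he)
    · rfl
  have hcomp := coeff_homogeneousComponent e.degree (MvPolynomial.aeval g Q) e
  rwa [if_pos rfl, homogeneousComponent_aeval hg, hQe, map_zero, coeff_zero, eq_comm] at hcomp

section LinearSubst

variable [Fintype τ]

noncomputable def linearSubst (A : Matrix σ τ R) (i : σ) : MvPolynomial τ R :=
  ∑ j, C (A i j) * X j

theorem isHomogeneous_linearSubst (A : Matrix σ τ R) (i : σ) :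
    (linearSubst A i).IsHomogeneous 1 :=
  IsHomogeneous.sum _ _ _ fun _ _ => isHomogeneous_C_mul_X _ _

theorem aeval_linearSubst {υ : Type*} [Fintype υ] (A : Matrix σ τ R) (B : Matrix τ υ R)
    (i : σ) : aeval (linearSubst B) (linearSubst A i) = linearSubst (A * B) i := by
  simp only [linearSubst, map_sum, map_mul, aeval_C, aeval_X, algebraMap_eq, Matrix.mul_apply,
    Finset.mul_sum, Finset.sum_mul, mul_assoc]
  exact Finset.sum_comm

theorem aeval_linearSubst_aeval_linearSubst_of_mul_eq_one [DecidableEq τ] {A B : Matrix τ τ R}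
    (hAB : A * B = 1) (Q : MvPolynomial τ R) :
    aeval (linearSubst B) (aeval (linearSubst A) Q) = Q := by
  rw [comp_aeval_apply]
  simp only [aeval_linearSubst, hAB]
  convert aeval_X_left_apply Q
  ext i : 1
  simp [linearSubst, Matrix.one_apply]

/-- Setting `Yₖ := T` in `P(a + A Y)` gives the expansion of `P` at the point `a + T·Aₖ` of
`F[T]^m` (with `Aₖ` the `k`-th column of `A`) in the remaining variables. -/
theorem aeval_update_X_aeval_linearSubst [DecidableEq τ] (P : MvPolynomial τ R) (a : τ → R)
    (A : Matrix τ τ R) (k : τ) :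
    aeval (Function.update X k (C Polynomial.X))
        (aeval (linearSubst A) (aeval (fun j => C (a j) + X j) P)) =
      aeval (linearSubst ((A.updateCol k 0).map Polynomial.C)) (aeval
        (fun j => C (Polynomial.C (a j) + Polynomial.C (A j k) * Polynomial.X) + X j) P) := by
  have key : ((aeval (Function.update X k (C Polynomial.X))).comp
      ((aeval (linearSubst A)).comp (aeval fun j => C (a j) + X j))) =
      ((aeval (linearSubst ((A.updateCol k 0).map Polynomial.C))).restrictScalars R).comp
        (aeval (fun j => C (Polynomial.C (a j) + Polynomial.C (A j k) * Polynomial.X) + X j)) := by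
    refine algHom_ext fun j => ?_
    simp [linearSubst, Function.update_apply, Matrix.updateCol_apply, Finset.sum_ite,
      Finset.filter_eq', add_assoc, apply_ite C, apply_ite Polynomial.C, ite_mul]
  exact congr($key P)

end LinearSubst

theorem aeval_update_X_monomial [DecidableEq σ] (k : σ) (d : σ →₀ ℕ) (r : R) :
    aeval (Function.update X k (C Polynomial.X)) (monomial d r) =
      monomial (d.erase k) (Polynomial.monomial (d k) r) := by
  conv_lhs => rw [← Finsupp.single_add_erase k d, monomial_single_add]
  rw [map_mul, map_pow, aeval_X, Function.update_self, aeval_monomial, monomial_eq,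
    Finsupp.prod_congr (g2 := fun i e => X i ^ e) fun i hi => by
      rw [Function.update_of_ne (by rintro rfl; simp at hi)]]
  rw [← Polynomial.C_mul_X_pow_eq_monomial, map_mul, ← C_pow, algebraMap_apply,
    Polynomial.algebraMap_eq]
  ring

theorem coeff_coeff_aeval_update_X [DecidableEq σ] (Q : MvPolynomial σ R) (k : σ)
    (e : σ →₀ ℕ) :
    (coeff (e.erase k) (aeval (Function.update X k (C Polynomial.X)) Q)).coeff (e k) =
      coeff e Q := by
  induction Q using MvPolynomial.induction_on' with
  | monomial d r =>
    rw [aeval_update_X_monomial, coeff_monomial, coeff_monomial]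
    by_cases hde : d = e
    · simp [hde]
    · have : ¬ (d.erase k = e.erase k ∧ d k = e k) := fun h => hde <| by
        ext i
        by_cases hi : i = k
        · exact hi ▸ h.2
        · simpa [Finsupp.erase_ne hi] using congr($(h.1) i)
      by_cases h1 : d.erase k = e.erase k
      · simpa [hde, h1, Polynomial.coeff_monomial] using fun h2 => absurd ⟨h1, h2⟩ this
      · simp [hde, h1]
  | add p q hp hq => simp only [map_add, coeff_add, Polynomial.coeff_add, hp, hq]

theorem vanishesAtZeroToOrder_of_forall_aeval_update_X [Fintype σ] [DecidableEq σ]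
    {Q : MvPolynomial σ R} {c : ℕ}
    (h : ∀ k, VanishesAtZeroToOrder
      (aeval (Function.update X k (C (Polynomial.X : Polynomial R))) Q) c) :
    Q.VanishesAtZeroToOrder (Fintype.card σ * c ⌈/⌉ (Fintype.card σ - 1)) := by
  intro e he
  obtain ⟨k, hk⟩ := Finsupp.exists_degree_erase_lt he
  rw [← coeff_coeff_aeval_update_X Q k e, h k _ hk, Polynomial.coeff_zero]

end MvPolynomial

theorem aeval_mvHasseDeriv {F A : Type*} [CommSemiring F] [CommSemiring A] [Algebra F A]
    {m : ℕ} (i : Fin m → ℕ) (P : MvPolynomial (Fin m) F) (x : Fin m → A) :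
    aeval x (mvHasseDeriv i P) =
      coeff (Finsupp.equivFunOnFinite.symm i) (aeval (fun k => C (x k) + X k) P) := by
  rw [mvHasseDeriv, ← AlgHom.coe_toRingHom, ← coeff_map, eval₂_comp_left, aeval_def]
  congr
  · ext r
    simp [MvPolynomial.algebraMap_apply]
  · funext k
    simp

theorem vanishesAtZeroToOrder_aeval_C_add_X_iff {F A : Type*} [CommSemiring F] [CommSemiring A]
    [Algebra F A] {m n : ℕ} (P : MvPolynomial (Fin m) F) (x : Fin m → A) :
    (aeval (fun k => C (x k) + X k) P).VanishesAtZeroToOrder n ↔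
      ∀ i : Fin m → ℕ, ∑ k, i k < n → aeval x (mvHasseDeriv i P) = 0 := by
  simp only [aeval_mvHasseDeriv, VanishesAtZeroToOrder, Finsupp.degree_eq_sum]
  exact Finsupp.equivFunOnFinite.symm.forall_congr_right.symm

theorem natCast_le_mvMult {F : Type*} [CommSemiring F] {m n : ℕ} {P : MvPolynomial (Fin m) F}
    {a : Fin m → F} (h : (aeval (fun k => C (a k) + X k) P).VanishesAtZeroToOrder n) :
    (n : ℕ∞) ≤ mvMult P a :=
  le_sSup fun i hi => by
    simpa using (vanishesAtZeroToOrder_aeval_C_add_X_iff P a).1 h i (by exact_mod_cast hi)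

/-- **Multiplicity amplification from lines through a point.**
If `m ≥ 2`, `B` is a basis of `F^m`, and for every `b ∈ B` and every `l` with `wt(l) < c` the
univariate polynomial `P^{(l)}(a + b·T)` vanishes identically, then
`(m−1)·mult(P, a) ≥ m·c`, i.e. `P` vanishes at `a` with multiplicity at least `c·m/(m−1)`. -/
theorem multiplicity_amplification {F : Type*} [Field F] {m : ℕ} (hm : 2 ≤ m)
    (c : ℕ) (a : Fin m → F) (P : MvPolynomial (Fin m) F)
    (B : Module.Basis (Fin m) F (Fin m → F))
    (h : ∀ k : Fin m, ∀ l : Fin m → ℕ, ∑ j, l j < c →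
      MvPolynomial.aeval
          (fun k' => Polynomial.C (a k') + Polynomial.C (B k k') * Polynomial.X)
          (mvHasseDeriv l P) = (0 : Polynomial F)) :
    ((m * c : ℕ) : ℕ∞) ≤ ((m - 1 : ℕ) : ℕ∞) * mvMult P a := by
  set S := aeval (fun j => C (a j) + X j) P
  -- the columns of `A` are the vectors of `B`
  set A := (Pi.basisFun F (Fin m)).toMatrix B
  have hline : ∀ k, (aeval (Function.update X k (C Polynomial.X))
      (aeval (linearSubst A) S)).VanishesAtZeroToOrder c := fun k => by
    rw [aeval_update_X_aeval_linearSubst]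
    refine ((vanishesAtZeroToOrder_aeval_C_add_X_iff _ _).2 fun l hl => ?_).aeval
      (isHomogeneous_linearSubst _)
    simpa [A, Module.Basis.toMatrix_apply] using h k l hl
  have hR := vanishesAtZeroToOrder_of_forall_aeval_update_X hline
  rw [Fintype.card_fin] at hR
  have hS : S.VanishesAtZeroToOrder (m * c ⌈/⌉ (m - 1)) := by
    rw [← aeval_linearSubst_aeval_linearSubst_of_mul_eq_one
      (Module.Basis.toMatrix_mul_toMatrix_flip _ B) S]
    exact hR.aeval (isHomogeneous_linearSubst _)
  calc ((m * c : ℕ) : ℕ∞) ≤ ((m - 1) * (m * c ⌈/⌉ (m - 1)) : ℕ) := by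
        exact_mod_cast (ceilDiv_le_iff_le_mul (by omega)).1 le_rfl
    _ ≤ ((m - 1 : ℕ) : ℕ∞) * mvMult P a := by
        push_cast
        gcongr
        exact natCast_le_mvMult hS
end

section
/- Let q be a prime power, let s be a positive integer, and let d < sq. Let P ∈ F_q[X] have degree at most d, and let r^{(0)},...,r^{(s−1)} : F_q → F_q be functions. Let A = {x ∈ F_q : r^{(i)}(x) = P^{(i)}(x) for all 0 ≤ i < s}, and suppose 2s·|A| > sq + d. Let E, N ∈ F_q[X] be polynomials with deg(E) ≤ (sq−d)/2 and deg(N) ≤ (sq+d)/2 such that for every x ∈ F_q and every 0 ≤ j < s, N^{(j)}(x) = Σ_{i=0}^{j} E^{(i)}(x)·r^{(j−i)}(x). Then N = E·P. (This is the correctness of the Berlekamp–Welch-style unique decoder for univariate multiplicity codes.) -/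
/-!
Put `Q = N - E·P`. At every point `x` of the agreement set `A` the received values `r⁽ⁱ⁾(x)` are
the Hasse derivatives of `P`, so by the Leibniz rule the key equations say exactly that the Hasse
derivatives of `Q` of order `< s` vanish at `x`; that is, `(X - x)^s ∣ Q`. Hence `Q` has at least
`s·|A|` roots counted with multiplicity, while the degree bounds give `2 deg Q ≤ sq + d < 2s·|A|`.
So `Q = 0`.
-/

open Polynomial Finset

namespace Polynomial

theorem eval_hasseDeriv_mul {R : Type*} [CommSemiring R] (f g : R[X]) (k : ℕ) (x : R) :
    (hasseDeriv k (f * g)).eval x =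
      ∑ i ∈ range (k + 1), (hasseDeriv i f).eval x * (hasseDeriv (k - i) g).eval x := by
  rw [hasseDeriv_mul, eval_finsetSum, Nat.sum_antidiagonal_eq_sum_range_succ_mk]
  simp only [eval_mul]

theorem X_sub_C_pow_dvd_iff_eval_hasseDeriv_eq_zero {R : Type*} [CommRing R] {p : R[X]} {x : R}
    {n : ℕ} : (X - C x) ^ n ∣ p ↔ ∀ i < n, (hasseDeriv i p).eval x = 0 := by
  rw [X_sub_C_pow_dvd_iff, ← taylor_apply, X_pow_dvd_iff]
  simp only [taylor_coeff]

/-- The multiplicity Schwartz–Zippel bound. -/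
theorem eq_zero_of_natDegree_lt_mul_card_of_X_sub_C_pow_dvd {R : Type*} [CommRing R] [IsDomain R]
    {p : R[X]} {n : ℕ} {A : Finset R} (hdeg : p.natDegree < n * #A)
    (hdvd : ∀ x ∈ A, (X - C x) ^ n ∣ p) : p = 0 := by
  classical
  by_contra hp
  have hle : n • A.val ≤ p.roots := by
    refine Multiset.le_iff_count.2 fun x => ?_
    rw [Multiset.count_nsmul, count_roots]
    by_cases hx : x ∈ A
    · rw [Multiset.count_eq_one_of_mem A.nodup hx, mul_one]
      exact (le_rootMultiplicity_iff hp).2 (hdvd x hx)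
    · rw [Multiset.count_eq_zero_of_notMem hx, mul_zero]
      exact Nat.zero_le _
  have := (Multiset.card_le_card hle).trans (card_roots' p)
  rw [Multiset.card_nsmul, card_val] at this
  omega

end Polynomial

theorem berlekamp_welch_multiplicity_general {F : Type*} [Field F] [Fintype F] (s d : ℕ)
    (hd : d < s * Fintype.card F)
    (P : Polynomial F) (hP : P.natDegree ≤ d) (r : ℕ → F → F)
    (hA : s * Fintype.card F + d <
      2 * s * Nat.card {x : F // ∀ i < s, r i x = (Polynomial.hasseDeriv i P).eval x})
    (E N : Polynomial F)
    (hE : 2 * E.natDegree ≤ s * Fintype.card F - d)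
    (hN : 2 * N.natDegree ≤ s * Fintype.card F + d)
    (heq : ∀ x : F, ∀ j < s, (Polynomial.hasseDeriv j N).eval x =
      ∑ i ∈ Finset.range (j + 1), (Polynomial.hasseDeriv i E).eval x * r (j - i) x) :
    N = E * P := by
  classical
  set A := univ.filter fun x => ∀ i < s, r i x = (hasseDeriv i P).eval x
  have hcard : Nat.card {x : F // ∀ i < s, r i x = (hasseDeriv i P).eval x} = #A := by
    rw [Nat.card_eq_fintype_card, Fintype.card_subtype]
  have hdeg : 2 * (N - E * P).natDegree ≤ s * Fintype.card F + d := by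
    have := (natDegree_sub_le N (E * P)).trans (max_le_max le_rfl natDegree_mul_le)
    omega
  have hdvd : ∀ x ∈ A, (X - C x) ^ s ∣ N - E * P := by
    intro x hx
    rw [mem_filter] at hx
    refine X_sub_C_pow_dvd_iff_eval_hasseDeriv_eq_zero.2 fun j hj => ?_
    rw [map_sub, eval_sub, heq x j hj, eval_hasseDeriv_mul, sub_eq_zero]
    exact sum_congr rfl fun i _ => by rw [hx.2 (j - i) (by omega)]
  refine sub_eq_zero.1 (eq_zero_of_natDegree_lt_mul_card_of_X_sub_C_pow_dvd ?_ hdvd)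
  rw [hcard, mul_assoc] at hA
  omega

/-- **Correctness of the Berlekamp–Welch style decoder for univariate multiplicity codes.**
Let `F = F_q`, `s > 0`, `d < sq`. Let `P` have degree at most `d` and let
`A = {x : r^{(i)}(x) = P^{(i)}(x) for all i < s}` satisfy `2s·|A| > sq + d`. If
`deg E ≤ (sq−d)/2`, `deg N ≤ (sq+d)/2` and `N^{(j)}(x) = ∑_{i≤j} E^{(i)}(x)·r^{(j−i)}(x)`
for all `x ∈ F_q` and `j < s`, then `N = E·P`. -/
theorem berlekamp_welch_multiplicity {F : Type*} [Field F] [Fintype F] (s d : ℕ)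
    (hs : 0 < s) (hd : d < s * Fintype.card F)
    (P : Polynomial F) (hP : P.natDegree ≤ d) (r : ℕ → F → F)
    (hA : s * Fintype.card F + d <
      2 * s * Nat.card {x : F // ∀ i < s, r i x = (Polynomial.hasseDeriv i P).eval x})
    (E N : Polynomial F)
    (hE : 2 * E.natDegree ≤ s * Fintype.card F - d)
    (hN : 2 * N.natDegree ≤ s * Fintype.card F + d)
    (heq : ∀ x : F, ∀ j < s, (Polynomial.hasseDeriv j N).eval x =
      ∑ i ∈ Finset.range (j + 1), (Polynomial.hasseDeriv i E).eval x * r (j - i) x) :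
    N = E * P :=
  berlekamp_welch_multiplicity_general s d hd P hP r hA E N hE hN heq
end
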